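/- arXiv:2407.05432 — 3 statements merged into one kernel-verified Lean document; each statement's English description precedes it below -/
import Mathlib

section
/- For p ≥ 2 and λ ≥ 0, define H_γ(ξ) = (|ξ|−λ)₊^γ ξ/|ξ| for ξ ≠ 0 and H_γ(0) = 0. Then for all ξ, η ∈ ℝⁿ: ⟨H_{p−1}(ξ) − H_{p−1}(η), ξ − η⟩ ≥ (4/p²) |H_{p/2}(ξ) − H_{p/2}(η)|². -/
open Classical in
noncomputable def Hfun (n : ℕ) (lam γ : ℝ) (ξ : EuclideanSpace ℝ (Fin n)) :
    EuclideanSpace ℝ (Fin n) :=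
  if ξ = 0 then 0 else ((max (‖ξ‖ - lam) 0) ^ γ / ‖ξ‖) • ξ

/-!
Both maps are radial, `H_γ ξ = h_γ(|ξ|) ξ / |ξ|` with `h_γ(t) = (t - λ)₊ ^ γ`. For fixed `|ξ|`, `|η|`
both sides of the inequality are affine in the cosine of the angle between `ξ` and `η`, so it
suffices to check the collinear cases `cos = ±1`, which are scalar inequalities. For `cos = 1`
this is `4 (x^{p/2} - y^{p/2})² ≤ p² (x^{p-1} - y^{p-1}) (x - y)`, proved by scaling to `x = 1`
and Bernoulli's inequality, and transferred to `h` because `t ↦ (t - λ)₊` is monotone and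
1-Lipschitz. For `cos = -1` it follows from AM-GM and `(t - λ)₊ ≤ t`.
-/

open Real InnerProductGeometry RealInnerProductSpace

lemma rpow_half_sq {p x : ℝ} (hx : 0 ≤ x) (hp : p ≠ 0) : (x ^ (p / 2)) ^ 2 = x ^ (p - 1) * x := by
  rw [← rpow_mul_natCast hx, ← rpow_add_one' hx (by simpa using hp)]
  congr 1
  push_cast
  ring

lemma four_mul_one_sub_rpow_half_sq_le {p r : ℝ} (hp : 2 ≤ p) (hr0 : 0 ≤ r) (hr1 : r ≤ 1) :
    4 * (1 - r ^ (p / 2)) ^ 2 ≤ p ^ 2 * ((1 - r ^ (p - 1)) * (1 - r)) := by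
  have bernoulli : 2 * (1 - r ^ (p / 2)) ≤ p * (1 - r) := by
    have := one_add_mul_self_le_rpow_one_add (s := r - 1) (by linarith) (p := p / 2) (by linarith)
    rw [add_sub_cancel] at this
    linarith
  have hmono : r ^ (p - 1) ≤ r ^ (p / 2) :=
    rpow_le_rpow_of_exponent_ge' hr0 hr1 (by linarith) (by linarith)
  have hle_one : r ^ (p / 2) ≤ 1 := rpow_le_one hr0 hr1 (by linarith)
  have hsecond : 2 * (1 - r ^ (p / 2)) ≤ p * (1 - r ^ (p - 1)) := by nlinarith
  calc 4 * (1 - r ^ (p / 2)) ^ 2 = (2 * (1 - r ^ (p / 2))) * (2 * (1 - r ^ (p / 2))) := by ring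
    _ ≤ (p * (1 - r)) * (p * (1 - r ^ (p - 1))) :=
      mul_le_mul bernoulli hsecond (by linarith) (by nlinarith)
    _ = p ^ 2 * ((1 - r ^ (p - 1)) * (1 - r)) := by ring

lemma sq_rpow_half_sub_le {p x y : ℝ} (hp : 2 ≤ p) (hy : 0 ≤ y) (hyx : y ≤ x) :
    4 / p ^ 2 * (x ^ (p / 2) - y ^ (p / 2)) ^ 2 ≤ (x ^ (p - 1) - y ^ (p - 1)) * (x - y) := by
  have hx : 0 ≤ x := hy.trans hyx
  obtain ⟨r, hr0, hr1, rfl⟩ : ∃ r, 0 ≤ r ∧ r ≤ 1 ∧ y = r * x :=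
    ⟨y / x, div_nonneg hy hx, div_le_one_of_le₀ hyx hx,
      (div_mul_cancel_of_imp fun h => le_antisymm (h ▸ hyx) hy).symm⟩
  rw [mul_rpow hr0 hx, mul_rpow hr0 hx]
  have hcore := four_mul_one_sub_rpow_half_sq_le hp hr0 hr1
  have hp2 : 0 < p ^ 2 := by positivity
  calc 4 / p ^ 2 * (x ^ (p / 2) - r ^ (p / 2) * x ^ (p / 2)) ^ 2
      = 4 / p ^ 2 * (1 - r ^ (p / 2)) ^ 2 * (x ^ (p / 2)) ^ 2 := by ring
    _ = 4 / p ^ 2 * (1 - r ^ (p / 2)) ^ 2 * (x ^ (p - 1) * x) := by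
      rw [rpow_half_sq hx (by positivity)]
    _ ≤ (1 - r ^ (p - 1)) * (1 - r) * (x ^ (p - 1) * x) := by
      refine mul_le_mul_of_nonneg_right ?_ (by positivity)
      rw [div_mul_eq_mul_div, div_le_iff₀ hp2]
      linarith
    _ = (x ^ (p - 1) - r ^ (p - 1) * x ^ (p - 1)) * (x - r * x) := by ring

lemma sq_rpow_half_add_le {p x y : ℝ} (hp : 2 ≤ p) (hx : 0 ≤ x) (hy : 0 ≤ y) :
    4 / p ^ 2 * (x ^ (p / 2) + y ^ (p / 2)) ^ 2 ≤ (x ^ (p - 1) + y ^ (p - 1)) * (x + y) := by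
  have hp0 : p ≠ 0 := by positivity
  have hx2 := rpow_half_sq hx hp0
  have hy2 := rpow_half_sq hy hp0
  have amgm : 2 * (x ^ (p / 2) * y ^ (p / 2)) ≤ x ^ (p - 1) * y + y ^ (p - 1) * x := by
    have hprod : (x ^ (p / 2) * y ^ (p / 2)) ^ 2 = (x ^ (p - 1) * y) * (y ^ (p - 1) * x) := by
      rw [mul_pow, hx2, hy2]; ring
    have hnonneg : 0 ≤ x ^ (p / 2) * y ^ (p / 2) := by positivity
    nlinarith [sq_nonneg (x ^ (p - 1) * y - y ^ (p - 1) * x),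
      mul_nonneg (rpow_nonneg hx (p - 1)) hy, mul_nonneg (rpow_nonneg hy (p - 1)) hx]
  calc 4 / p ^ 2 * (x ^ (p / 2) + y ^ (p / 2)) ^ 2 ≤ (x ^ (p / 2) + y ^ (p / 2)) ^ 2 :=
        mul_le_of_le_one_left (sq_nonneg _) (by rw [div_le_one (by positivity)]; nlinarith)
    _ ≤ (x ^ (p - 1) + y ^ (p - 1)) * (x + y) := by linear_combination hx2 + hy2 + amgm

lemma sq_rpow_trunc_sub_le {p : ℝ} (hp : 2 ≤ p) (lam a b : ℝ) :
    4 / p ^ 2 * (max (a - lam) 0 ^ (p / 2) - max (b - lam) 0 ^ (p / 2)) ^ 2 ≤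
      (max (a - lam) 0 ^ (p - 1) - max (b - lam) 0 ^ (p - 1)) * (a - b) := by
  wlog hba : b ≤ a generalizing a b
  · linarith [this b a (le_of_not_ge hba)]
  have hy : 0 ≤ max (b - lam) 0 := le_max_right _ _
  have hyx : max (b - lam) 0 ≤ max (a - lam) 0 := max_le_max (by linarith) le_rfl
  have hlip : max (a - lam) 0 - max (b - lam) 0 ≤ a - b := by
    have hle : max (a - lam) 0 ≤ (a - b) + max (b - lam) 0 :=
      max_le (by linarith [le_max_left (b - lam) 0]) (by linarith)
    linarith
  calc _ ≤ (max (a - lam) 0 ^ (p - 1) - max (b - lam) 0 ^ (p - 1)) *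
        (max (a - lam) 0 - max (b - lam) 0) := sq_rpow_half_sub_le hp hy hyx
    _ ≤ _ := mul_le_mul_of_nonneg_left hlip
        (sub_nonneg.2 (rpow_le_rpow hy hyx (by linarith)))

lemma sq_rpow_trunc_add_le {p lam a b : ℝ} (hp : 2 ≤ p) (hlam : 0 ≤ lam) (ha : 0 ≤ a)
    (hb : 0 ≤ b) :
    4 / p ^ 2 * (max (a - lam) 0 ^ (p / 2) + max (b - lam) 0 ^ (p / 2)) ^ 2 ≤
      (max (a - lam) 0 ^ (p - 1) + max (b - lam) 0 ^ (p - 1)) * (a + b) := by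
  have hx : 0 ≤ max (a - lam) 0 := le_max_right _ _
  have hy : 0 ≤ max (b - lam) 0 := le_max_right _ _
  calc _ ≤ (max (a - lam) 0 ^ (p - 1) + max (b - lam) 0 ^ (p - 1)) *
        (max (a - lam) 0 + max (b - lam) 0) := sq_rpow_half_add_le hp hx hy
    _ ≤ _ := mul_le_mul_of_nonneg_left
        (add_le_add (max_le (by linarith) ha) (max_le (by linarith) hb)) (by positivity)

section Radial

variable {E : Type*} [NormedAddCommGroup E] [InnerProductSpace ℝ E]

noncomputable def radial (φ : ℝ → ℝ) (x : E) : E := (φ ‖x‖ / ‖x‖) • x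

lemma inner_radial_self (f : ℝ → ℝ) (x : E) : ⟪radial f x, x⟫ = f ‖x‖ * ‖x‖ := by
  rw [radial, real_inner_smul_left, real_inner_self_eq_norm_sq]
  rcases eq_or_ne ‖x‖ 0 with h | h
  · simp [h]
  · field_simp

-- `angle x 0 = π / 2`, so the identities below need no case distinction at `0`.
lemma inner_radial_left (f : ℝ → ℝ) (x y : E) :
    ⟪radial f x, y⟫ = f ‖x‖ * ‖y‖ * cos (angle x y) := by
  rcases eq_or_ne x 0 with rfl | hx
  · simp [radial, angle_zero_left]
  · rw [radial, real_inner_smul_left, ← cos_angle_mul_norm_mul_norm]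
    field_simp [norm_ne_zero_iff.2 hx]

lemma norm_radial {g : ℝ → ℝ} (hg : g 0 = 0) (x : E) : ‖radial g x‖ = |g ‖x‖| := by
  rcases eq_or_ne x 0 with rfl | hx
  · simp [radial, hg]
  · rw [radial, norm_smul, norm_div, norm_norm, div_mul_cancel₀ _ (norm_ne_zero_iff.2 hx),
      Real.norm_eq_abs]

lemma inner_radial_radial (g : ℝ → ℝ) (x y : E) :
    ⟪radial g x, radial g y⟫ = g ‖x‖ * g ‖y‖ * cos (angle x y) := by
  rw [radial, radial, real_inner_smul_left, real_inner_smul_right, cos_angle]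
  ring

lemma inner_radial_sub_radial (f : ℝ → ℝ) (x y : E) :
    ⟪radial f x - radial f y, x - y⟫ =
      f ‖x‖ * ‖x‖ + f ‖y‖ * ‖y‖ - (f ‖x‖ * ‖y‖ + f ‖y‖ * ‖x‖) * cos (angle x y) := by
  rw [inner_sub_left, inner_sub_right, inner_sub_right, inner_radial_self, inner_radial_self,
    inner_radial_left, inner_radial_left, angle_comm y x]
  ring

lemma norm_radial_sub_radial_sq {g : ℝ → ℝ} (hg : g 0 = 0) (x y : E) :
    ‖radial g x - radial g y‖ ^ 2 =
      g ‖x‖ ^ 2 + g ‖y‖ ^ 2 - 2 * g ‖x‖ * g ‖y‖ * cos (angle x y) := by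
  rw [norm_sub_sq_real, norm_radial hg, norm_radial hg, inner_radial_radial, sq_abs, sq_abs]
  ring

theorem le_inner_radial_sub_radial {f g : ℝ → ℝ} {C : ℝ} (hg : g 0 = 0)
    (hsub : ∀ a b, 0 ≤ a → 0 ≤ b → C * (g a - g b) ^ 2 ≤ (f a - f b) * (a - b))
    (hadd : ∀ a b, 0 ≤ a → 0 ≤ b → C * (g a + g b) ^ 2 ≤ (f a + f b) * (a + b)) (x y : E) :
    C * ‖radial g x - radial g y‖ ^ 2 ≤ ⟪radial f x - radial f y, x - y⟫ := by
  rw [norm_radial_sub_radial_sq hg, inner_radial_sub_radial]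
  have h₁ := hsub ‖x‖ ‖y‖ (norm_nonneg x) (norm_nonneg y)
  have h₂ := hadd ‖x‖ ‖y‖ (norm_nonneg x) (norm_nonneg y)
  have hcos₁ : 0 ≤ 1 + cos (angle x y) := by linarith [neg_one_le_cos (angle x y)]
  have hcos₂ : 0 ≤ 1 - cos (angle x y) := by linarith [cos_le_one (angle x y)]
  linear_combination (mul_le_mul_of_nonneg_left h₁ hcos₁ + mul_le_mul_of_nonneg_left h₂ hcos₂) / 2

end Radial

lemma Hfun_eq_radial (n : ℕ) (lam γ : ℝ) :
    Hfun n lam γ = radial (fun t => max (t - lam) 0 ^ γ) := by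
  funext ξ
  rw [Hfun, radial]
  split_ifs with h <;> simp [h]

theorem H_monotonicity (n : ℕ) (p lam : ℝ) (hp : 2 ≤ p) (hlam : 0 ≤ lam)
    (ξ η : EuclideanSpace ℝ (Fin n)) :
    (inner ℝ (Hfun n lam (p - 1) ξ - Hfun n lam (p - 1) η) (ξ - η) : ℝ) ≥
      (4 / p ^ 2) * ‖Hfun n lam (p / 2) ξ - Hfun n lam (p / 2) η‖ ^ 2 := by
  rw [ge_iff_le, Hfun_eq_radial, Hfun_eq_radial]
  refine le_inner_radial_sub_radial ?_ (fun a b _ _ => sq_rpow_trunc_sub_le hp lam a b)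
    (fun a b ha hb => sq_rpow_trunc_add_le hp hlam ha hb) ξ η
  rw [zero_sub, max_eq_right (by linarith), zero_rpow (by positivity)]
end

section
/- For p ≥ 2, λ ≥ 0, and ξ, η ∈ ℝⁿ with |η| > λ, one has ⟨H_{p−1}(ξ) − H_{p−1}(η), ξ − η⟩ ≥ 2^{−(p+1)} (|η|−λ)^p / (|η|(|ξ|+|η|)) · |ξ − η|². -/
lemma Hfun_eq_smul (n : ℕ) (lam γ : ℝ) (ξ : EuclideanSpace ℝ (Fin n)) :
    Hfun n lam γ ξ = ((max (‖ξ‖ - lam) 0) ^ γ / ‖ξ‖) • ξ := by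
  by_cases hξ : ξ = 0 <;> simp [Hfun, hξ]

lemma real_inner_smul_sub_smul_sub {E : Type*} [NormedAddCommGroup E] [InnerProductSpace ℝ E]
    (α β : ℝ) (x y : E) :
    inner ℝ (α • x - β • y) (x - y) =
      α * (‖x‖ ^ 2 - inner ℝ x y) + β * (‖y‖ ^ 2 - inner ℝ x y) := by
  simp only [inner_sub_left, inner_sub_right, real_inner_smul_left, real_inner_self_eq_norm_sq,
    real_inner_comm x y]
  ring

lemma Real.rpow_mul_sub_sq_le {x y q : ℝ} (hx : 0 ≤ x) (hy : 0 ≤ y) (hq : 0 ≤ q) :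
    y ^ q * (x - y) ^ 2 ≤ (x ^ (q + 1) - y ^ (q + 1)) * (x - y) := by
  have hq1 : q + 1 ≠ 0 := by linarith
  rw [Real.rpow_add' hx hq1, Real.rpow_add' hy hq1, Real.rpow_one, Real.rpow_one]
  have hmono : 0 ≤ (x ^ q - y ^ q) * (x - y) := by
    rcases le_total x y with h | h
    · exact mul_nonneg_of_nonpos_of_nonpos
        (sub_nonpos.2 (Real.rpow_le_rpow hx h hq)) (sub_nonpos.2 h)
    · exact mul_nonneg (sub_nonneg.2 (Real.rpow_le_rpow hy h hq)) (sub_nonneg.2 h)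
  nlinarith [mul_nonneg hx hmono]

lemma le_of_endpoints {a b s c α β : ℝ} (hs : |s| ≤ a * b)
    (hplus : c * (a + b) ^ 2 ≤ (α * a + β * b) * (a + b))
    (hminus : c * (a - b) ^ 2 ≤ (α * a - β * b) * (a - b)) :
    c * (a ^ 2 + b ^ 2 - 2 * s) ≤ α * (a ^ 2 - s) + β * (b ^ 2 - s) := by
  obtain ⟨hs₁, hs₂⟩ := abs_le.1 hs
  rcases (abs_nonneg s |>.trans hs).eq_or_lt with hab | hab
  · obtain rfl : s = 0 := by linarith
    nlinarith
  · refine le_of_mul_le_mul_left ?_ (by linarith : 0 < 2 * (a * b))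
    nlinarith [mul_le_mul_of_nonneg_left hplus (by linarith : 0 ≤ a * b - s),
      mul_le_mul_of_nonneg_left hminus (by linarith : 0 ≤ a * b + s)]

noncomputable def modulus (p lam a b : ℝ) : ℝ := (b - lam) ^ p / (b * (a + b))

section Modulus

variable {p lam a b : ℝ}

lemma max_sub_rpow_div_mul_self (hlam : 0 ≤ lam) (hp : p ≠ 0) (a : ℝ) :
    max (a - lam) 0 ^ p / a * a = max (a - lam) 0 ^ p := by
  rcases eq_or_ne a 0 with rfl | ha
  · simp [hlam, Real.zero_rpow hp]
  · exact div_mul_cancel₀ _ ha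

lemma modulus_mul_add_le (hlam : 0 ≤ lam) (ha : 0 ≤ a) (hb : lam < b) :
    modulus p lam a b * (a + b) ≤ (b - lam) ^ (p - 1) := by
  have ht : 0 < b - lam := by linarith
  have hb0 : 0 < b := by linarith
  calc modulus p lam a b * (a + b) = (b - lam) ^ (p - 1) * (b - lam) / b := by
        rw [modulus, ← Real.rpow_add_one ht.ne', sub_add_cancel]
        field_simp
    _ ≤ (b - lam) ^ (p - 1) := by
        rw [div_le_iff₀ hb0]
        gcongr
        linarith

lemma modulus_le (hlam : 0 ≤ lam) (ha : 0 ≤ a) (hb : lam < b) :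
    modulus p lam a b ≤ (b - lam) ^ (p - 2) := by
  have ht : 0 < b - lam := by linarith
  have hpow : (b - lam) ^ p = (b - lam) ^ (p - 2) * (b - lam) ^ 2 := by
    rw [← Real.rpow_natCast, ← Real.rpow_add ht]; norm_num
  rw [modulus, div_le_iff₀ (by nlinarith), hpow]
  gcongr
  nlinarith

lemma modulus_mul_add_sq_le (hlam : 0 ≤ lam) (ha : 0 ≤ a) (hb : lam < b) :
    modulus p lam a b * (a + b) ^ 2 ≤
      (max (a - lam) 0 ^ (p - 1) + (b - lam) ^ (p - 1)) * (a + b) := by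
  have hg : 0 ≤ max (a - lam) 0 ^ (p - 1) := Real.rpow_nonneg (le_max_right _ _) _
  rw [sq, ← mul_assoc]
  gcongr
  · linarith
  · linarith [modulus_mul_add_le (p := p) hlam ha hb]

lemma modulus_mul_sub_sq_le (hp : 2 ≤ p) (hlam : 0 ≤ lam) (ha : 0 ≤ a) (hb : lam < b) :
    modulus p lam a b * (a - b) ^ 2 ≤
      (max (a - lam) 0 ^ (p - 1) - (b - lam) ^ (p - 1)) * (a - b) := by
  rcases le_total a lam with hal | hla
  · rw [max_eq_right (by linarith), Real.zero_rpow (by linarith), zero_sub, neg_mul_comm,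
      neg_sub, show (a - b) ^ 2 = (b - a) * (b - a) by ring, ← mul_assoc]
    gcongr
    · linarith
    · calc modulus p lam a b * (b - a) ≤ modulus p lam a b * (a + b) := by
            gcongr
            · exact div_nonneg (Real.rpow_nonneg (by linarith) _) (by nlinarith)
            · linarith
        _ ≤ (b - lam) ^ (p - 1) := modulus_mul_add_le hlam ha hb
  · have hstrong := Real.rpow_mul_sub_sq_le (sub_nonneg.2 hla) (by linarith : 0 ≤ b - lam)
      (by linarith : 0 ≤ p - 2)
    rw [show p - 2 + 1 = p - 1 by ring, show a - lam - (b - lam) = a - b by ring] at hstrong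
    rw [max_eq_left (by linarith)]
    exact (mul_le_mul_of_nonneg_right (modulus_le hlam ha hb) (sq_nonneg _)).trans hstrong

lemma modulus_mul_le (hp : 2 ≤ p) (hlam : 0 ≤ lam) (ha : 0 ≤ a) (hb : lam < b) {s : ℝ}
    (hs : |s| ≤ a * b) :
    modulus p lam a b * (a ^ 2 + b ^ 2 - 2 * s) ≤
      max (a - lam) 0 ^ (p - 1) / a * (a ^ 2 - s) +
        max (b - lam) 0 ^ (p - 1) / b * (b ^ 2 - s) := by
  have hr : p - 1 ≠ 0 := by linarith
  apply le_of_endpoints hs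
  · rw [max_sub_rpow_div_mul_self hlam hr, max_sub_rpow_div_mul_self hlam hr,
      max_eq_left (by linarith : 0 ≤ b - lam)]
    exact modulus_mul_add_sq_le hlam ha hb
  · rw [max_sub_rpow_div_mul_self hlam hr, max_sub_rpow_div_mul_self hlam hr,
      max_eq_left (by linarith : 0 ≤ b - lam)]
    exact modulus_mul_sub_sq_le hp hlam ha hb

end Modulus

theorem H_monotonicity_nondeg (n : ℕ) (p lam : ℝ) (hp : 2 ≤ p) (hlam : 0 ≤ lam)
    (ξ η : EuclideanSpace ℝ (Fin n)) (hη : lam < ‖η‖) :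
    (inner ℝ (Hfun n lam (p - 1) ξ - Hfun n lam (p - 1) η) (ξ - η) : ℝ) ≥
      (2 : ℝ) ^ (-(p + 1)) * ((‖η‖ - lam) ^ p / (‖η‖ * (‖ξ‖ + ‖η‖))) * ‖ξ - η‖ ^ 2 := by
  have hconst : (2 : ℝ) ^ (-(p + 1)) ≤ 1 :=
    Real.rpow_le_one_of_one_le_of_nonpos (by norm_num) (by linarith)
  have hmod : 0 ≤ modulus p lam ‖ξ‖ ‖η‖ * ‖ξ - η‖ ^ 2 :=
    mul_nonneg (div_nonneg (Real.rpow_nonneg (by linarith) _) (by positivity)) (sq_nonneg _)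
  rw [Hfun_eq_smul, Hfun_eq_smul, real_inner_smul_sub_smul_sub, ge_iff_le, mul_assoc]
  calc (2 : ℝ) ^ (-(p + 1)) * (modulus p lam ‖ξ‖ ‖η‖ * ‖ξ - η‖ ^ 2)
      ≤ modulus p lam ‖ξ‖ ‖η‖ * ‖ξ - η‖ ^ 2 := mul_le_of_le_one_left hmod hconst
    _ ≤ _ := by
      rw [norm_sub_sq_real, show ‖ξ‖ ^ 2 - 2 * inner ℝ ξ η + ‖η‖ ^ 2 =
        ‖ξ‖ ^ 2 + ‖η‖ ^ 2 - 2 * inner ℝ ξ η by ring]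
      exact modulus_mul_le hp hlam (norm_nonneg ξ) hη (abs_real_inner_le_norm ξ η)
end

section
/- Let p ≥ 2, λ ≥ 0, α ≥ 0. Define 𝒱_{α,λ}(ξ) = 𝒢_{α,λ}((|ξ|−λ)₊) ξ/|ξ| for |ξ| > λ and 𝒱_{α,λ}(ξ) = 0 for |ξ| ≤ λ, where 𝒢_{α,λ}(t) = ∫₀ᵗ ω^((p−1+2α)/2)(ω+λ)^(−(1+2α)/2) dω. Then there is a constant C = C(p) > 0 such that for all ξ, η ∈ ℝⁿ: |𝒱_{α,λ}(ξ) − 𝒱_{α,λ}(η)|² ≤ C ⟨H_{p−1}(ξ) − H_{p−1}(η), ξ − η⟩. -/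
noncomputable def Gfun (p α lam t : ℝ) : ℝ :=
  ∫ ω in (0:ℝ)..t, ω ^ ((p - 1 + 2 * α) / 2) / (ω + lam) ^ ((1 + 2 * α) / 2)

noncomputable def Vfun (n : ℕ) (p α lam : ℝ) (ξ : EuclideanSpace ℝ (Fin n)) :
    EuclideanSpace ℝ (Fin n) :=
  if lam < ‖ξ‖ then (Gfun p α lam (max (‖ξ‖ - lam) 0) / ‖ξ‖) • ξ else 0

/-!
Both `𝒱` and `H_{p-1}` are radial fields `F_g ξ = (g |ξ| / |ξ|) ξ`. Writing `s = |ξ|`, `t = |η|`,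
`|F_g ξ - F_g η|² = (g s - g t)² + 2 (g s / s) (g t / t) (s t - ⟨ξ, η⟩)` and
`⟨F_k ξ - F_k η, ξ - η⟩ = (k s - k t)(s - t) + (k s / s + k t / t) (s t - ⟨ξ, η⟩)`,
with `s t - ⟨ξ, η⟩ ≥ 0`, so it suffices to compare the radial and the angular coefficients.
For `g = 𝒢 ∘ (· - λ)₊` and `k = (· - λ)₊^{p-1}` both comparisons hold with `C = 2`; they
follow from `𝒢'(ω) ≤ ω^{(p-2)/2}`, i.e. `𝒢 v - 𝒢 u ≤ (v - u) v^{(p-2)/2}`, and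
`v^{p-1} = v (v^{(p-2)/2})²`.
-/

open MeasureTheory Set
open scoped RealInnerProductSpace

section RadialField

variable {E : Type*} [NormedAddCommGroup E] [InnerProductSpace ℝ E]

theorem norm_smul_sub_smul_sq_le_inner {x y u v C : ℝ} {ξ η : E}
    (h₁ : (x * ‖ξ‖ - y * ‖η‖) ^ 2 ≤ C * ((u * ‖ξ‖ - v * ‖η‖) * (‖ξ‖ - ‖η‖)))
    (h₂ : 2 * (x * y) ≤ C * (u + v)) :
    ‖x • ξ - y • η‖ ^ 2 ≤ C * ⟪u • ξ - v • η, ξ - η⟫ := by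
  have hCS : 0 ≤ ‖ξ‖ * ‖η‖ - ⟪ξ, η⟫ := sub_nonneg.2 (real_inner_le_norm ξ η)
  have hL : ‖x • ξ - y • η‖ ^ 2
      = (x * ‖ξ‖ - y * ‖η‖) ^ 2 + 2 * (x * y) * (‖ξ‖ * ‖η‖ - ⟪ξ, η⟫) := by
    rw [norm_sub_sq_real, real_inner_smul_left, real_inner_smul_right, norm_smul, norm_smul,
      mul_pow, mul_pow, Real.norm_eq_abs, Real.norm_eq_abs, sq_abs, sq_abs]
    ring
  have hR : ⟪u • ξ - v • η, ξ - η⟫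
      = (u * ‖ξ‖ - v * ‖η‖) * (‖ξ‖ - ‖η‖) + (u + v) * (‖ξ‖ * ‖η‖ - ⟪ξ, η⟫) := by
    simp only [inner_sub_left, inner_sub_right, real_inner_smul_left, real_inner_self_eq_norm_sq,
      real_inner_comm ξ η]
    ring
  rw [hL, hR]
  nlinarith [mul_le_mul_of_nonneg_right h₂ hCS]

noncomputable def radialField (g : ℝ → ℝ) (ξ : E) : E := (g ‖ξ‖ / ‖ξ‖) • ξ

theorem norm_radialField_sub_sq_le {g k : ℝ → ℝ} {C : ℝ} (hg : g 0 = 0) (hk : k 0 = 0)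
    (h₁ : ∀ s t, 0 ≤ t → t ≤ s → (g s - g t) ^ 2 ≤ C * ((k s - k t) * (s - t)))
    (h₂ : ∀ s t, 0 ≤ t → t ≤ s → 2 * (g s * g t) ≤ C * (k s * t + k t * s)) (ξ η : E) :
    ‖radialField g ξ - radialField g η‖ ^ 2
      ≤ C * ⟪radialField k ξ - radialField k η, ξ - η⟫ := by
  wlog hηξ : ‖η‖ ≤ ‖ξ‖ generalizing ξ η
  · rw [norm_sub_rev, ← inner_neg_neg, neg_sub, neg_sub]
    exact this η ξ (le_of_not_ge hηξ)
  have ht : 0 ≤ ‖η‖ := norm_nonneg η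
  have cancel : ∀ {f : ℝ → ℝ}, f 0 = 0 → ∀ r : ℝ, f r / r * r = f r :=
    fun hf r => div_mul_cancel_of_imp fun hr => by rw [hr, hf]
  apply norm_smul_sub_smul_sq_le_inner
  · rw [cancel hg, cancel hg, cancel hk, cancel hk]
    exact h₁ _ _ ht hηξ
  rcases ht.eq_or_lt with ht0 | htpos
  -- at `η = 0` the coefficients `g t / t`, `k t / t` are `0` (division by zero), and `h₁` at
  -- `t = 0` gives `g s ^ 2 ≤ C * (k s * s)`
  · have hks : 0 ≤ C * (k ‖ξ‖ / ‖ξ‖) := by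
      have h := h₁ ‖ξ‖ 0 le_rfl (norm_nonneg ξ)
      rw [hg, hk, sub_zero, sub_zero, sub_zero] at h
      rcases eq_or_ne ‖ξ‖ 0 with hs0 | hs0
      · simp [hs0]
      · rw [show C * (k ‖ξ‖ / ‖ξ‖) = C * (k ‖ξ‖ * ‖ξ‖) / ‖ξ‖ ^ 2 by field_simp]
        exact div_nonneg ((sq_nonneg _).trans h) (sq_nonneg _)
    simp [← ht0, hks]
  · have hspos : 0 < ‖ξ‖ := htpos.trans_le hηξ
    calc 2 * (g ‖ξ‖ / ‖ξ‖ * (g ‖η‖ / ‖η‖)) = 2 * (g ‖ξ‖ * g ‖η‖) / (‖ξ‖ * ‖η‖) := by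
          field_simp
      _ ≤ C * (k ‖ξ‖ * ‖η‖ + k ‖η‖ * ‖ξ‖) / (‖ξ‖ * ‖η‖) :=
          div_le_div_of_nonneg_right (h₂ _ _ ht hηξ) (by positivity)
      _ = C * (k ‖ξ‖ / ‖ξ‖ + k ‖η‖ / ‖η‖) := by
          field_simp

end RadialField

theorem rpow_sub_one_eq_mul_sq {p x : ℝ} (hp : p ≠ 1) (hx : 0 ≤ x) :
    x ^ (p - 1) = x * (x ^ ((p - 2) / 2)) ^ 2 := by
  rw [← Real.rpow_mul_natCast hx, show p - 1 = (p - 2) / 2 * (2 : ℕ) + 1 by push_cast; ring,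
    Real.rpow_add_one' hx (by push_cast; intro h; exact hp (by linarith)), mul_comm]

section Profile

variable {p α lam : ℝ}

noncomputable def gIntegrand (p α lam ω : ℝ) : ℝ :=
  ω ^ ((p - 1 + 2 * α) / 2) / (ω + lam) ^ ((1 + 2 * α) / 2)

theorem Gfun_zero : Gfun p α lam 0 = 0 := intervalIntegral.integral_same

theorem gIntegrand_nonneg (hlam : 0 ≤ lam) {ω : ℝ} (hω : 0 ≤ ω) : 0 ≤ gIntegrand p α lam ω :=
  div_nonneg (Real.rpow_nonneg hω _) (Real.rpow_nonneg (by linarith) _)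

theorem gIntegrand_le_rpow (hα : 0 ≤ α) (hlam : 0 ≤ lam) {ω : ℝ} (hω : 0 < ω) :
    gIntegrand p α lam ω ≤ ω ^ ((p - 2) / 2) :=
  calc gIntegrand p α lam ω ≤ ω ^ ((p - 1 + 2 * α) / 2) / ω ^ ((1 + 2 * α) / 2) :=
        div_le_div_of_nonneg_left (Real.rpow_nonneg hω.le _) (Real.rpow_pos_of_pos hω _)
          (Real.rpow_le_rpow hω.le (by linarith) (by linarith))
    _ = ω ^ ((p - 2) / 2) := by rw [← Real.rpow_sub hω]; ring_nf

theorem intervalIntegrable_gIntegrand (hp : 2 ≤ p) (hα : 0 ≤ α) (hlam : 0 ≤ lam) {a b : ℝ}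
    (ha : 0 ≤ a) (hb : 0 ≤ b) : IntervalIntegrable (gIntegrand p α lam) volume a b := by
  refine (intervalIntegral.intervalIntegrable_rpow' (r := (p - 2) / 2) (by linarith)).mono_fun
    (by unfold gIntegrand; fun_prop : Measurable (gIntegrand p α lam)).aestronglyMeasurable ?_
  refine (ae_restrict_iff' measurableSet_uIoc).2 (ae_of_all _ fun ω hω => ?_)
  have hω : 0 < ω := (le_min ha hb).trans_lt hω.1
  dsimp only
  rw [Real.norm_of_nonneg (gIntegrand_nonneg hlam hω.le),
    Real.norm_of_nonneg (Real.rpow_nonneg hω.le _)]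
  exact gIntegrand_le_rpow hα hlam hω

theorem Gfun_sub_eq_integral (hp : 2 ≤ p) (hα : 0 ≤ α) (hlam : 0 ≤ lam) {u v : ℝ}
    (hu : 0 ≤ u) (hv : 0 ≤ v) :
    Gfun p α lam v - Gfun p α lam u = ∫ ω in u..v, gIntegrand p α lam ω :=
  intervalIntegral.integral_interval_sub_left
    (intervalIntegrable_gIntegrand hp hα hlam le_rfl hv)
    (intervalIntegrable_gIntegrand hp hα hlam le_rfl hu)

theorem Gfun_monotoneOn (hp : 2 ≤ p) (hα : 0 ≤ α) (hlam : 0 ≤ lam) :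
    MonotoneOn (Gfun p α lam) (Ici 0) := fun u hu v _ huv => by
  rw [← sub_nonneg, Gfun_sub_eq_integral hp hα hlam hu (hu.trans huv)]
  exact intervalIntegral.integral_nonneg huv fun ω hω =>
    gIntegrand_nonneg hlam ((mem_Ici.1 hu).trans hω.1)

theorem Gfun_sub_le (hp : 2 ≤ p) (hα : 0 ≤ α) (hlam : 0 ≤ lam) {u v : ℝ}
    (hu : 0 ≤ u) (huv : u ≤ v) :
    Gfun p α lam v - Gfun p α lam u ≤ (v - u) * v ^ ((p - 2) / 2) := by
  rw [Gfun_sub_eq_integral hp hα hlam hu (hu.trans huv)]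
  calc ∫ ω in u..v, gIntegrand p α lam ω ≤ ∫ _ in u..v, v ^ ((p - 2) / 2) :=
        intervalIntegral.integral_mono_on_of_le_Ioo huv
          (intervalIntegrable_gIntegrand hp hα hlam hu (hu.trans huv)) intervalIntegrable_const
          fun ω hω => (gIntegrand_le_rpow hα hlam (hu.trans_lt hω.1)).trans
            (Real.rpow_le_rpow (hu.trans hω.1.le) hω.2.le (by linarith))
    _ = (v - u) * v ^ ((p - 2) / 2) := by simp

theorem Gfun_sub_sq_le (hp : 2 ≤ p) (hα : 0 ≤ α) (hlam : 0 ≤ lam) {u v : ℝ}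
    (hu : 0 ≤ u) (huv : u ≤ v) :
    (Gfun p α lam v - Gfun p α lam u) ^ 2 ≤ (v - u) * (v ^ (p - 1) - u ^ (p - 1)) := by
  have hv : 0 ≤ v := hu.trans huv
  have hG : 0 ≤ Gfun p α lam v - Gfun p α lam u :=
    sub_nonneg.2 (Gfun_monotoneOn hp hα hlam hu hv huv)
  have hr : u ^ ((p - 2) / 2) ≤ v ^ ((p - 2) / 2) := Real.rpow_le_rpow hu huv (by linarith)
  have hp₁ : p ≠ 1 := ne_of_gt (by linarith)
  rw [rpow_sub_one_eq_mul_sq hp₁ hv, rpow_sub_one_eq_mul_sq hp₁ hu]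
  nlinarith [pow_le_pow_left₀ hG (Gfun_sub_le hp hα hlam hu huv) 2,
    mul_le_mul_of_nonneg_left (pow_le_pow_left₀ (Real.rpow_nonneg hu _) hr 2) hu,
    sub_nonneg.2 huv]

theorem Gfun_le (hp : 2 ≤ p) (hα : 0 ≤ α) (hlam : 0 ≤ lam) {u : ℝ} (hu : 0 ≤ u) :
    Gfun p α lam u ≤ u * u ^ ((p - 2) / 2) := by
  simpa [Gfun_zero] using Gfun_sub_le hp hα hlam le_rfl hu

theorem Gfun_mul_le (hp : 2 ≤ p) (hα : 0 ≤ α) (hlam : 0 ≤ lam) {u v : ℝ}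
    (hu : 0 ≤ u) (huv : u ≤ v) :
    Gfun p α lam v * Gfun p α lam u ≤ v ^ (p - 1) * u := by
  have hv : 0 ≤ v := hu.trans huv
  have hr : u ^ ((p - 2) / 2) ≤ v ^ ((p - 2) / 2) := Real.rpow_le_rpow hu huv (by linarith)
  have hGu : 0 ≤ Gfun p α lam u := by
    simpa [Gfun_zero] using Gfun_monotoneOn hp hα hlam (mem_Ici.2 le_rfl) hu hu
  calc Gfun p α lam v * Gfun p α lam u
      ≤ (v * v ^ ((p - 2) / 2)) * (u * v ^ ((p - 2) / 2)) :=
        mul_le_mul (Gfun_le hp hα hlam hv)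
          ((Gfun_le hp hα hlam hu).trans (mul_le_mul_of_nonneg_left hr hu)) hGu
          (mul_nonneg hv (Real.rpow_nonneg hv _))
    _ = v ^ (p - 1) * u := by rw [rpow_sub_one_eq_mul_sq (ne_of_gt (by linarith)) hv]; ring

end Profile

section PositivePart

variable {p α lam s t : ℝ}

theorem Gfun_posPart_sub_sq_le (hp : 2 ≤ p) (hα : 0 ≤ α) (hlam : 0 ≤ lam) (hts : t ≤ s) :
    (Gfun p α lam (max (s - lam) 0) - Gfun p α lam (max (t - lam) 0)) ^ 2
      ≤ (max (s - lam) 0 ^ (p - 1) - max (t - lam) 0 ^ (p - 1)) * (s - t) := by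
  have hV : 0 ≤ max (t - lam) 0 := le_max_right _ _
  have hVU : max (t - lam) 0 ≤ max (s - lam) 0 := max_le_max (by linarith) le_rfl
  have hUV : max (s - lam) 0 - max (t - lam) 0 ≤ s - t := by
    simpa [sub_nonneg.2 hts] using max_sub_max_le_max (s - lam) 0 (t - lam) 0
  have hk : 0 ≤ max (s - lam) 0 ^ (p - 1) - max (t - lam) 0 ^ (p - 1) :=
    sub_nonneg.2 (Real.rpow_le_rpow hV hVU (by linarith))
  calc _ ≤ (max (s - lam) 0 - max (t - lam) 0)
          * (max (s - lam) 0 ^ (p - 1) - max (t - lam) 0 ^ (p - 1)) :=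
        Gfun_sub_sq_le hp hα hlam hV hVU
    _ ≤ _ := by rw [mul_comm]; exact mul_le_mul_of_nonneg_left hUV hk

theorem Gfun_posPart_mul_le (hp : 2 ≤ p) (hα : 0 ≤ α) (hlam : 0 ≤ lam) (ht : 0 ≤ t)
    (hts : t ≤ s) :
    Gfun p α lam (max (s - lam) 0) * Gfun p α lam (max (t - lam) 0)
      ≤ max (s - lam) 0 ^ (p - 1) * t :=
  (Gfun_mul_le hp hα hlam (le_max_right _ _) (max_le_max (by linarith) le_rfl)).trans
    (mul_le_mul_of_nonneg_left (max_le (by linarith) ht) (Real.rpow_nonneg (le_max_right _ _) _))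

end PositivePart

theorem Vfun_eq_radialField (n : ℕ) (p α lam : ℝ) :
    Vfun n p α lam = radialField fun s => Gfun p α lam (max (s - lam) 0) := by
  funext ξ
  unfold Vfun radialField
  beta_reduce
  split_ifs with h
  · rfl
  · rw [max_eq_right (by linarith [not_lt.1 h]), Gfun_zero, zero_div, zero_smul]

theorem Hfun_eq_radialField (n : ℕ) (lam γ : ℝ) :
    Hfun n lam γ = radialField fun s => max (s - lam) 0 ^ γ := by
  funext ξ
  unfold Hfun radialField
  split_ifs with h
  · rw [h, smul_zero]
  · rfl

theorem V_diff_bounded_by_H (p : ℝ) (hp : 2 ≤ p) :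
    ∃ C > 0, ∀ (n : ℕ) (lam α : ℝ), 0 ≤ lam → 0 ≤ α →
      ∀ ξ η : EuclideanSpace ℝ (Fin n),
        ‖Vfun n p α lam ξ - Vfun n p α lam η‖ ^ 2 ≤
          C * (inner ℝ (Hfun n lam (p - 1) ξ - Hfun n lam (p - 1) η) (ξ - η) : ℝ) := by
  refine ⟨2, two_pos, fun n lam α hlam hα ξ η => ?_⟩
  rw [Vfun_eq_radialField, Hfun_eq_radialField]
  have h0 : max (0 - lam) 0 = 0 := max_eq_right (by linarith)
  refine norm_radialField_sub_sq_le (by simp only [h0, Gfun_zero])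
    (by simp only [h0]; exact Real.zero_rpow (by linarith)) (fun s t _ hts => ?_)
    (fun s t ht hts => ?_) ξ η
  · have h := Gfun_posPart_sub_sq_le hp hα hlam hts
    exact h.trans (le_mul_of_one_le_left ((sq_nonneg _).trans h) one_le_two)
  · have h := Gfun_posPart_mul_le hp hα hlam ht hts
    have : 0 ≤ max (t - lam) 0 ^ (p - 1) * s :=
      mul_nonneg (Real.rpow_nonneg (le_max_right _ _) _) (ht.trans hts)
    linarith
end
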